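/- arXiv:1101.6033 — 2 statements merged into one kernel-verified Lean document; each statement's English description precedes it below -/
import Mathlib

section
/- Let F be a field and suppose a polynomial φ of degree D in F[x,y,z] factors as φ = P·Q where the top homogeneous components P_s of P and Q_t of Q are relatively prime, and suppose all homogeneous components of φ of degree strictly between e and D are zero, where e < t. Then for each r with 1 ≤ r < t, the homogeneous components P_{s−r} and Q_{t−r} are zero. -/
/-!
Write `A = P_s` and `B = Q_t`. By induction on `r`, `P` and `Q` have no homogeneous components
of degree in `(s - r, s)`, resp. `(t - r, t)`, so the degree `s + t - r` component of `PQ` is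
`A * Q_{t-r} + P_{s-r} * B`. Its vanishing gives `A ∣ P_{s-r} * B`, hence `A ∣ P_{s-r}` by
coprimality, and a homogeneous multiple of `A` of degree below `s` is zero. Then `A * Q_{t-r} = 0`.
-/

open MvPolynomial

namespace MvPolynomial

variable {σ R : Type*}

section CommSemiring

variable [CommSemiring R]

open Finset

attribute [local instance] gradedAlgebra in
theorem homogeneousComponent_mul (f g : MvPolynomial σ R) (n : ℕ) :
    homogeneousComponent n (f * g) =
      ∑ ij ∈ antidiagonal n, homogeneousComponent ij.1 f * homogeneousComponent ij.2 g := by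
  simp only [← decomposition.decompose'_apply]
  change ((DirectSum.decompose (homogeneousSubmodule σ R) (f * g)) n : MvPolynomial σ R) = _
  rw [DirectSum.decompose_mul, DirectSum.coe_mul_apply_eq_sum_antidiagonal]
  rfl

theorem IsHomogeneous.eq_zero_of_dvd {A X : MvPolynomial σ R} {m k : ℕ}
    (hA : A.IsHomogeneous m) (hX : X.IsHomogeneous k) (hkm : k < m) (hdvd : A ∣ X) : X = 0 := by
  obtain ⟨c, rfl⟩ := hdvd
  rw [← homogeneousComponent_eq_self hX, homogeneousComponent_mul]
  refine sum_eq_zero fun ij hij => ?_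
  have hi : ij.1 ≠ m := by
    have := mem_antidiagonal.mp hij
    omega
  rw [homogeneousComponent_of_mem hA, if_neg hi, zero_mul]

theorem homogeneousComponent_mul_of_gaps {f g : MvPolynomial σ R} {m n r : ℕ}
    (hr : 0 < r) (hrm : r ≤ m) (hrn : r ≤ n)
    (hf : ∀ i, m - r < i → i ≠ m → homogeneousComponent i f = 0)
    (hg : ∀ j, n - r < j → j ≠ n → homogeneousComponent j g = 0) :
    homogeneousComponent (m + n - r) (f * g) =
      homogeneousComponent m f * homogeneousComponent (n - r) g +
        homogeneousComponent (m - r) f * homogeneousComponent n g := by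
  rw [homogeneousComponent_mul]
  refine sum_eq_add_of_mem (m, n - r) (m - r, n)
    (mem_antidiagonal.mpr (by omega)) (mem_antidiagonal.mpr (by omega))
    (by simp only [ne_eq, Prod.mk.injEq]; omega) ?_
  rintro ⟨i, j⟩ hij hne
  rw [HasAntidiagonal.mem_antidiagonal] at hij
  simp only [ne_eq, Prod.mk.injEq] at hne
  by_cases hi : m - r < i ∧ i ≠ m
  · rw [hf i hi.1 hi.2, zero_mul]
  · rw [hg j (by omega) (by omega), mul_zero]

theorem homogeneousComponent_eq_zero_of_gap {f : MvPolynomial σ R} {n r i : ℕ}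
    (hf : f.totalDegree ≤ n) (hgap : ∀ k, 1 ≤ k → k < r → homogeneousComponent (n - k) f = 0)
    (hi : n - r < i) (hin : i ≠ n) : homogeneousComponent i f = 0 := by
  rcases hin.lt_or_gt with hlt | hgt
  · simpa [show n - (n - i) = i by omega] using hgap (n - i) (by omega) (by omega)
  · exact homogeneousComponent_eq_zero _ _ (hf.trans_lt hgt)

end CommSemiring

theorem IsHomogeneous.eq_zero_of_mul_add_mul_eq_zero [CommRing R] [IsDomain R]
    [UniqueFactorizationMonoid R] {A B X Y : MvPolynomial σ R} {m k : ℕ}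
    (hA : A.IsHomogeneous m) (hA0 : A ≠ 0) (hAB : IsRelPrime A B)
    (hX : X.IsHomogeneous k) (hkm : k < m) (h : A * Y + X * B = 0) : X = 0 ∧ Y = 0 := by
  have hXB : A ∣ X * B := ⟨-Y, by linear_combination h⟩
  have hX0 : X = 0 := hA.eq_zero_of_dvd hX hkm (hAB.dvd_of_dvd_mul_right hXB)
  rw [hX0, zero_mul, add_zero] at h
  exact ⟨hX0, (mul_eq_zero.mp h).resolve_left hA0⟩

end MvPolynomial

theorem components_vanish_general (F : Type*) [Field F]
    (P Q : MvPolynomial (Fin 3) F) (s t : ℕ) (hts : t ≤ s)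
    (hPdeg : P.totalDegree = s) (hQdeg : Q.totalDegree = t)
    (hPs : homogeneousComponent s P ≠ 0)
    (hcop : ∀ d : MvPolynomial (Fin 3) F,
      d ∣ homogeneousComponent s P → d ∣ homogeneousComponent t Q → IsUnit d)
    (hvanish : ∀ r, 1 ≤ r → r < t → homogeneousComponent (s + t - r) (P * Q) = 0) :
    ∀ r, 1 ≤ r → r < t →
      homogeneousComponent (s - r) P = 0 ∧ homogeneousComponent (t - r) Q = 0 := by
  intro r
  induction r using Nat.strong_induction_on with
  | _ r ih =>
  intro hr hrt
  have gapP (i) : s - r < i → i ≠ s → homogeneousComponent i P = 0 :=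
    homogeneousComponent_eq_zero_of_gap hPdeg.le fun k hk hkr => (ih k hkr hk (by omega)).1
  have gapQ (j) : t - r < j → j ≠ t → homogeneousComponent j Q = 0 :=
    homogeneousComponent_eq_zero_of_gap hQdeg.le fun k hk hkr => (ih k hkr hk (by omega)).2
  have key := hvanish r hr hrt
  rw [homogeneousComponent_mul_of_gaps hr (by omega) hrt.le gapP gapQ] at key
  exact (homogeneousComponent_isHomogeneous s P).eq_zero_of_mul_add_mul_eq_zero hPs hcop
    (homogeneousComponent_isHomogeneous _ P) (by omega) key

theorem components_vanish (F : Type*) [Field F]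
    (P Q : MvPolynomial (Fin 3) F) (s t : ℕ) (hts : t ≤ s)
    (hPdeg : P.totalDegree = s) (hQdeg : Q.totalDegree = t)
    (hPs : homogeneousComponent s P ≠ 0) (hQt : homogeneousComponent t Q ≠ 0)
    (hcop : ∀ d : MvPolynomial (Fin 3) F,
      d ∣ homogeneousComponent s P → d ∣ homogeneousComponent t Q → IsUnit d)
    (hvanish : ∀ r, 1 ≤ r → r < t → homogeneousComponent (s + t - r) (P * Q) = 0) :
    ∀ r, 1 ≤ r → r < t →
      homogeneousComponent (s - r) P = 0 ∧ homogeneousComponent (t - r) Q = 0 :=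
  components_vanish_general F P Q s t hts hPdeg hQdeg hPs hcop hvanish
end

section
/- In characteristic 2, for m = 2^{2k−2} − 2^{k−2} + 1 with k ≥ 3, the expansion of (s+α)^m truncated below degree 2^{k−2}+1 equals α^m + s·α^{m−1} + s^{2^{k−2}}·α^{2^{2k−2} − 2^{k−1} + 1}, i.e., the binomial coefficient C(m, r) is odd for r ∈ {0, 1, 2^{k−2}} and even for all other r with 0 < r ≤ 2^{k−2}. -/
private lemma lucas2 (n r : ℕ) :
    (n.choose r) % 2 = ((n % 2).choose (r % 2) * ((n / 2).choose (r / 2))) % 2 :=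
  Choose.choose_modEq_choose_mod_mul_choose_div_nat (p := 2)

private lemma kasami_key (t : ℕ) (ht : 1 ≤ t) :
    ∀ b : ℕ, ∀ s ≤ 2 ^ b,
      (Odd ((2 ^ b * (2 ^ t - 1)).choose s) ↔ s = 0 ∨ s = 2 ^ b) := by
  intro b
  induction b with
  | zero =>
    intro s hs
    have hu : 2 ^ t = 2 * 2 ^ (t - 1) := by
      rw [← pow_succ']; congr 1; omega
    have h1 : 1 ≤ 2 ^ t := Nat.one_le_two_pow
    interval_cases s
    · simp
    · simp only [pow_zero, one_mul, Nat.choose_one_right]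
      rw [Nat.odd_iff]
      constructor
      · intro _; right; trivial
      · intro _; omega
  | succ b ih =>
    intro s hs
    have h1 : 1 ≤ 2 ^ t := Nat.one_le_two_pow
    have hNe : (2 ^ (b + 1) * (2 ^ t - 1)) % 2 = 0 := by
      have hv : 2 ^ (b + 1) = 2 * 2 ^ b := by rw [pow_succ']
      rw [hv, mul_assoc]
      omega
    have hNd : (2 ^ (b + 1) * (2 ^ t - 1)) / 2 = 2 ^ b * (2 ^ t - 1) := by
      rw [pow_succ, mul_comm (2 ^ b) 2, mul_assoc, Nat.mul_div_cancel_left _ two_pos]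
    have hpow : 2 ^ (b + 1) = 2 * 2 ^ b := by rw [pow_succ]; ring
    have hmod := Nat.div_add_mod s 2
    rw [Nat.odd_iff, lucas2, hNe, hNd]
    rcases Nat.mod_two_eq_zero_or_one s with hpar | hpar
    · rw [hpar, Nat.choose_self, one_mul]
      have hs2 : s / 2 ≤ 2 ^ b := by omega
      have := ih (s / 2) hs2
      rw [Nat.odd_iff] at this
      rw [this]
      omega
    · rw [hpar]
      simp only [Nat.choose_eq_zero_of_lt (by norm_num : 0 < 1), zero_mul,
        Nat.zero_mod]
      constructor
      · omega
      · rintro (h | h) <;> omega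

theorem kasami_binomial_parity (k : ℕ) (hk : 3 ≤ k) :
    ∀ r : ℕ, r ≤ 2 ^ (k - 2) →
      (Odd ((2 ^ (2 * k - 2) - 2 ^ (k - 2) + 1).choose r) ↔
        r = 0 ∨ r = 1 ∨ r = 2 ^ (k - 2)) := by
  intro r hr
  set a := k - 2 with ha
  have ha1 : 1 ≤ a := by omega
  have hm : 2 ^ (2 * k - 2) - 2 ^ (k - 2) + 1
      = 2 * (2 ^ (a - 1) * (2 ^ (a + 2) - 1)) + 1 := by
    have h2k : 2 * k - 2 = (a - 1) + 1 + (a + 2) := by omega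
    have hk2 : k - 2 = (a - 1) + 1 := by omega
    rw [h2k, hk2]
    have h1 : 1 ≤ 2 ^ (a + 2) := Nat.one_le_two_pow
    rw [pow_add, Nat.mul_sub_one, pow_succ]
    ring_nf
    omega
  have hpa : 2 ^ a = 2 * 2 ^ (a - 1) := by
    rw [← pow_succ']
    congr 1
    omega
  rw [hm]
  have hNe : (2 * (2 ^ (a - 1) * (2 ^ (a + 2) - 1)) + 1) % 2 = 1 := by omega
  have hNd : (2 * (2 ^ (a - 1) * (2 ^ (a + 2) - 1)) + 1) / 2
      = 2 ^ (a - 1) * (2 ^ (a + 2) - 1) := by omega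
  have hr2 : r / 2 ≤ 2 ^ (a - 1) := by
    rw [hpa] at hr
    omega
  have hkey := kasami_key (a + 2) (by omega) (a - 1) (r / 2) hr2
  rw [Nat.odd_iff] at hkey ⊢
  rw [lucas2, hNe, hNd]
  have hc1 : (1 : ℕ).choose (r % 2) = 1 := by
    rcases Nat.mod_two_eq_zero_or_one r with h | h <;> simp [h]
  rw [hc1, one_mul, hkey]
  have hmod := Nat.div_add_mod r 2
  rw [hpa] at hr ⊢
  have hrm : r % 2 < 2 := Nat.mod_lt _ two_pos
  omega
end
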